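/- Let q in R^d be a query vector and v_1, ..., v_n in R^d be atom vectors, and for each coordinate j in {1,...,d} set a_j = q_j^2 * sum_{i=1}^n v_{ij}^2. Assume a_j > 0 for every j. Define w*_j = sqrt(a_j) / ( sum_{j'=1}^d sqrt(a_{j'}) ). Then (w*_1, ..., w*_d) is a probability vector with positive entries, and for every probability vector (w_1, ..., w_d) with w_j > 0 for all j one has sum_{j=1}^d a_j / w*_j <= sum_{j=1}^d a_j / w_j, with sum_{j=1}^d a_j / w*_j = ( sum_{j=1}^d sqrt(a_j) )^2. Consequently w* minimizes the combined variance sum_{i=1}^n Var_{J ~ P_w}[ X_{iJ} ] of the importance-sampling estimators X_{iJ} = v_{iJ} q_J / (d * w_J) over all probability vectors w with positive entries. -/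
import Mathlib


/-- Optimality of the BanditMIPS importance-sampling weights: with
`a j = q j ^ 2 * ∑ i, v i j ^ 2` all positive and
`w* j = √(a j) / ∑ j', √(a j')`, the vector `w*` is a positive probability vector, it
minimizes `∑ j, a j / w j` over positive probability vectors `w` (with optimal value
`(∑ j, √(a j))²`), and consequently it minimizes the combined variance
`∑ i, Var[X i J]` of the importance-sampling estimators
`X i J = v i J * q J / (d * w J)`. -/
theorem stmt_9 (d n : ℕ) (hd : 0 < d) (q : Fin d → ℝ) (v : Fin n → Fin d → ℝ)
    (a : Fin d → ℝ) (ha : ∀ j, a j = (q j) ^ 2 * ∑ i, (v i j) ^ 2)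
    (hapos : ∀ j, 0 < a j)
    (wstar : Fin d → ℝ)
    (hwstar : ∀ j, wstar j = Real.sqrt (a j) / ∑ j', Real.sqrt (a j')) :
    ((∀ j, 0 < wstar j) ∧ ∑ j, wstar j = 1) ∧
    (∀ w : Fin d → ℝ, (∀ j, 0 < w j) → ∑ j, w j = 1 →
      ∑ j, a j / wstar j ≤ ∑ j, a j / w j) ∧
    (∑ j, a j / wstar j = (∑ j, Real.sqrt (a j)) ^ 2) ∧
    (∀ w : Fin d → ℝ, (∀ j, 0 < w j) → ∑ j, w j = 1 →
      (∑ i, ((∑ j, wstar j * (v i j * q j / (d * wstar j)) ^ 2)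
          - ((∑ j, v i j * q j) / d) ^ 2)) ≤
      (∑ i, ((∑ j, w j * (v i j * q j / (d * w j)) ^ 2)
          - ((∑ j, v i j * q j) / d) ^ 2))) := by
  haveI : Nonempty (Fin d) := ⟨⟨0, hd⟩⟩
  set S : ℝ := ∑ j', Real.sqrt (a j') with hS
  have hSpos : 0 < S :=
    Finset.sum_pos (fun j _ => Real.sqrt_pos.mpr (hapos j)) Finset.univ_nonempty
  have hwpos : ∀ j, 0 < wstar j := fun j => by
    rw [hwstar]; exact div_pos (Real.sqrt_pos.mpr (hapos j)) hSpos
  have hwsum : ∑ j, wstar j = 1 := by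
    simp only [hwstar, ← Finset.sum_div]
    exact div_self hSpos.ne'
  -- optimal value
  have hval : ∑ j, a j / wstar j = S ^ 2 := by
    have : ∀ j, a j / wstar j = Real.sqrt (a j) * S := by
      intro j
      rw [hwstar, div_div_eq_mul_div, div_eq_iff (Real.sqrt_pos.mpr (hapos j)).ne']
      nth_rewrite 1 [← Real.mul_self_sqrt (hapos j).le]
      ring
    rw [Finset.sum_congr rfl fun j _ => this j, ← Finset.sum_mul, sq]
  -- main inequality
  have hopt : ∀ w : Fin d → ℝ, (∀ j, 0 < w j) → ∑ j, w j = 1 →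
      ∑ j, a j / wstar j ≤ ∑ j, a j / w j := by
    intro w hw hw1
    rw [hval]
    have := Finset.sq_sum_div_le_sum_sq_div Finset.univ (fun j => Real.sqrt (a j))
      (g := w) (fun j _ => hw j)
    rw [hw1, div_one] at this
    simpa [Real.sq_sqrt (hapos _).le] using this
  refine ⟨⟨hwpos, hwsum⟩, hopt, hval, ?_⟩
  -- variance part
  have key : ∀ w : Fin d → ℝ, (∀ j, 0 < w j) →
      (∑ i, ∑ j, w j * (v i j * q j / (d * w j)) ^ 2)
        = (∑ j, a j / w j) / (d : ℝ) ^ 2 := by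
    intro w hw
    rw [Finset.sum_comm, Finset.sum_div]
    refine Finset.sum_congr rfl fun j _ => ?_
    have hdne : (d : ℝ) ≠ 0 := Nat.cast_ne_zero.mpr hd.ne'
    have hwne : w j ≠ 0 := (hw j).ne'
    rw [ha j, div_div, Finset.mul_sum, Finset.sum_div]
    refine Finset.sum_congr rfl fun i _ => ?_
    field_simp
  intro w hw hw1
  have h1 := key w hw
  have h2 := key wstar hwpos
  have h3 := hopt w hw hw1
  have hd2 : (0:ℝ) < (d:ℝ)^2 := by positivity
  simp only [Finset.sum_sub_distrib]
  gcongr ?_ - _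
  rw [h1, h2]
  gcongr
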